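/- arXiv:1402.7349 — 2 statements merged into one kernel-verified Lean document; each statement's English description precedes it below -/
import Mathlib

section
/- Fix ρ > 0 and symmetric matrices Θ̃, W₁, S with S the empirical covariance matrix. The unique minimizer over positive definite symmetric Θ of −log det Θ + trace(SΘ) + (ρ/2)‖Θ − Θ̃ + W₁‖_F² is Θ* = (1/2) U (D + √(D² + (4/ρ)I)) Uᵀ, where U D Uᵀ is the eigendecomposition of Θ̃ − W₁ − (1/ρ)S. -/
/-!
Write `A = Θ̃ - W₁` and `f` for the objective. Because `U` is orthogonal, `Θ* = U diag(x) Uᵀ`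
where `xᵢ > 0` is the positive root of `ρ x² - ρ dᵢ x - 1`; hence `Θ*` is positive definite and
`ρ (Θ* - A) + S = Θ*⁻¹`, i.e. `Θ*` is a stationary point of `f`. The tangent-plane inequality
`log det Θ ≤ log det Θ* + tr (Θ*⁻¹ Θ) - p` of the concave `log det` (conjugate by `√Θ*` and apply
`log t ≤ t - 1` to the eigenvalues), added to the exact expansion of the quadratic term, gives
`f Θ* + (ρ/2) ‖Θ - Θ*‖² ≤ f Θ`, whence minimality and uniqueness.
-/

open Matrix BigOperators

/-- The squared Frobenius norm of a matrix. -/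
def frobSq {p : ℕ} (A : Matrix (Fin p) (Fin p) ℝ) : ℝ := ∑ i, ∑ j, (A i j) ^ 2

namespace Matrix

variable {n : Type*} [Fintype n] [DecidableEq n]

theorem PosDef.log_det_le_trace_sub_card {M : Matrix n n ℝ} (hM : M.PosDef) :
    Real.log M.det ≤ M.trace - Fintype.card n := by
  have hev := hM.eigenvalues_pos
  rw [hM.isHermitian.det_eq_prod_eigenvalues, hM.isHermitian.trace_eq_sum_eigenvalues]
  simp only [RCLike.ofReal_real_eq_id, id]
  rw [Real.log_prod fun i _ => (hev i).ne']
  calc ∑ i, Real.log (hM.isHermitian.eigenvalues i)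
      ≤ ∑ i, (hM.isHermitian.eigenvalues i - 1) :=
        Finset.sum_le_sum fun i _ => Real.log_le_sub_one_of_pos (hev i)
    _ = _ := by simp [Finset.sum_sub_distrib]

open scoped MatrixOrder in
theorem PosDef.log_det_le_log_det_add_trace_inv_mul {A B : Matrix n n ℝ} (hA : A.PosDef)
    (hB : B.PosDef) :
    Real.log B.det ≤ Real.log A.det + (A⁻¹ * B).trace - Fintype.card n := by
  set R := CFC.sqrt A
  have hRR : R * R = A := CFC.sqrt_mul_sqrt_self A hA.posSemidef.nonneg
  have hRsymm : Rᵀ = R := (CFC.sqrt_nonneg A).posSemidef.isHermitian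
  have hRunit : IsUnit R := (CFC.isUnit_sqrt_iff A hA.posSemidef.nonneg).mpr hA.isUnit
  have hM : (R⁻¹ * B * R⁻¹).PosDef := by
    have hstar : star R⁻¹ = R⁻¹ := by
      rw [star_eq_conjTranspose, conjTranspose_nonsing_inv, conjTranspose_eq_transpose_of_trivial,
        hRsymm]
    simpa only [hstar] using
      (isUnit_nonsing_inv_iff.mpr hRunit).posDef_star_left_conjugate_iff.mpr hB
  have hdet : (R⁻¹ * B * R⁻¹).det = B.det * A.det⁻¹ := by
    rw [← hRR, det_mul, det_mul, det_mul, det_nonsing_inv, Ring.inverse_eq_inv']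
    ring
  have htrace : (R⁻¹ * B * R⁻¹).trace = (A⁻¹ * B).trace := by
    rw [trace_mul_cycle, ← hRR, mul_inv_rev]
  have key := hM.log_det_le_trace_sub_card
  rw [hdet, htrace, Real.log_mul hB.det_pos.ne' (inv_ne_zero hA.det_pos.ne'), Real.log_inv] at key
  linarith

theorem posDef_mul_diagonal_mul_transpose {U : Matrix n n ℝ} {x : n → ℝ} (hU : U * Uᵀ = 1)
    (hx : ∀ i, 0 < x i) : (U * diagonal x * Uᵀ).PosDef := by
  have hUunit : IsUnit U := (isUnit_iff_isUnit_det U).mpr (isUnit_det_of_right_inverse hU)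
  rw [← conjTranspose_eq_transpose_of_trivial, ← star_eq_conjTranspose,
    hUunit.posDef_star_right_conjugate_iff, posDef_diagonal_iff]
  exact hx

theorem inv_mul_diagonal_mul_transpose {U : Matrix n n ℝ} {x : n → ℝ} (hU : U * Uᵀ = 1)
    (hU' : Uᵀ * U = 1) (hx : ∀ i, x i ≠ 0) :
    (U * diagonal x * Uᵀ)⁻¹ = U * diagonal x⁻¹ * Uᵀ := by
  refine inv_eq_left_inv ?_
  have hinv : diagonal x⁻¹ * diagonal x = 1 := by
    rw [diagonal_mul_diagonal, ← diagonal_one]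
    exact congrArg diagonal (funext fun i => inv_mul_cancel₀ (hx i))
  calc U * diagonal x⁻¹ * Uᵀ * (U * diagonal x * Uᵀ)
      = U * (diagonal x⁻¹ * (Uᵀ * U) * diagonal x) * Uᵀ := by simp only [Matrix.mul_assoc]
    _ = 1 := by rw [hU', Matrix.mul_one, hinv, Matrix.mul_one, hU]

end Matrix

section Frobenius

variable {p : ℕ}

theorem frobSq_eq_trace (A : Matrix (Fin p) (Fin p) ℝ) : frobSq A = (Aᵀ * A).trace := by
  simp only [frobSq, trace, diag, mul_apply, transpose_apply, sq]
  exact Finset.sum_comm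

theorem frobSq_add (X Y : Matrix (Fin p) (Fin p) ℝ) :
    frobSq (X + Y) = frobSq X + 2 * (Xᵀ * Y).trace + frobSq Y := by
  simp only [frobSq_eq_trace, transpose_add, add_mul, mul_add, trace_add]
  rw [← trace_transpose (Yᵀ * X), transpose_mul, transpose_transpose]
  ring

theorem frobSq_nonneg (A : Matrix (Fin p) (Fin p) ℝ) : 0 ≤ frobSq A := by
  rw [frobSq_eq_trace]
  simpa using (posSemidef_conjTranspose_mul_self A).trace_nonneg

theorem frobSq_pos {A : Matrix (Fin p) (Fin p) ℝ} (hA : A ≠ 0) : 0 < frobSq A := by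
  refine (frobSq_nonneg A).lt_of_ne fun h => hA ?_
  rw [frobSq_eq_trace, ← conjTranspose_eq_transpose_of_trivial] at h
  exact trace_conjTranspose_mul_self_eq_zero_iff.mp h.symm

theorem objective_add_frobSq_le {ρ : ℝ} {S A Θ₀ Θ : Matrix (Fin p) (Fin p) ℝ}
    (hΘ₀ : Θ₀.PosDef) (hΘ : Θ.PosDef) (hstat : ρ • (Θ₀ - A) + S = Θ₀⁻¹) :
    -Real.log Θ₀.det + (S * Θ₀).trace + ρ / 2 * frobSq (Θ₀ - A) + ρ / 2 * frobSq (Θ - Θ₀) ≤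
      -Real.log Θ.det + (S * Θ).trace + ρ / 2 * frobSq (Θ - A) := by
  have hsymm : (Θ - Θ₀)ᵀ = Θ - Θ₀ := by
    rw [← conjTranspose_eq_transpose_of_trivial, conjTranspose_sub, hΘ.isHermitian.eq,
      hΘ₀.isHermitian.eq]
  have hsplit : frobSq (Θ - A) =
      frobSq (Θ - Θ₀) + 2 * ((Θ - Θ₀)ᵀ * (Θ₀ - A)).trace + frobSq (Θ₀ - A) := by
    rw [← frobSq_add, sub_add_sub_cancel]
  have hcross : ρ * ((Θ - Θ₀)ᵀ * (Θ₀ - A)).trace =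
      (Θ₀⁻¹ * Θ).trace - Fintype.card (Fin p) - ((S * Θ).trace - (S * Θ₀).trace) := by
    calc ρ * ((Θ - Θ₀)ᵀ * (Θ₀ - A)).trace = ((Θ - Θ₀) * (Θ₀⁻¹ - S)).trace := by
          rw [hsymm, ← hstat, add_sub_cancel_right, Matrix.mul_smul, trace_smul, smul_eq_mul]
      _ = _ := by
          rw [sub_mul, mul_sub, mul_sub, mul_nonsing_inv _ hΘ₀.det_pos.ne'.isUnit, trace_sub,
            trace_sub, trace_sub, trace_one, trace_mul_comm Θ, trace_mul_comm Θ,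
            trace_mul_comm Θ₀]
          ring
  have hlogdet := hΘ₀.log_det_le_log_det_add_trace_inv_mul hΘ
  rw [hsplit]
  linarith

end Frobenius

noncomputable def hglEigenvalue (ρ d : ℝ) : ℝ := (d + √(d ^ 2 + 4 / ρ)) / 2

section Eigenvalue

variable {ρ : ℝ}

theorem hglEigenvalue_pos (hρ : 0 < ρ) (d : ℝ) : 0 < hglEigenvalue ρ d := by
  have habs : |d| < √(d ^ 2 + 4 / ρ) := by
    rw [← Real.sqrt_sq_eq_abs]
    exact Real.sqrt_lt_sqrt (sq_nonneg d) (lt_add_of_pos_right _ (by positivity))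
  unfold hglEigenvalue
  linarith [neg_abs_le d]

theorem mul_hglEigenvalue_sub (hρ : 0 < ρ) (d : ℝ) :
    ρ * (hglEigenvalue ρ d - d) = (hglEigenvalue ρ d)⁻¹ := by
  refine eq_inv_of_mul_eq_one_right ?_
  have hsq : √(d ^ 2 + 4 / ρ) ^ 2 = d ^ 2 + 4 / ρ := Real.sq_sqrt (by positivity)
  have hρ4 : ρ * (4 / ρ) = 4 := mul_div_cancel₀ 4 hρ.ne'
  unfold hglEigenvalue
  linear_combination ρ / 4 * hsq + hρ4 / 4

theorem hgl_stationary {n : Type*} [Fintype n] [DecidableEq n] (hρ : 0 < ρ)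
    {S A U : Matrix n n ℝ} {d : n → ℝ} (hU : U * Uᵀ = 1) (hU' : Uᵀ * U = 1)
    (hdecomp : A - ρ⁻¹ • S = U * diagonal d * Uᵀ) :
    ρ • (U * diagonal (fun i => hglEigenvalue ρ (d i)) * Uᵀ - A) + S =
      (U * diagonal (fun i => hglEigenvalue ρ (d i)) * Uᵀ)⁻¹ := by
  set x : n → ℝ := fun i => hglEigenvalue ρ (d i)
  have hA : A = U * diagonal d * Uᵀ + ρ⁻¹ • S := by rw [← hdecomp, sub_add_cancel]
  rw [hA, inv_mul_diagonal_mul_transpose hU hU' fun i => (hglEigenvalue_pos hρ (d i)).ne']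
  calc ρ • (U * diagonal x * Uᵀ - (U * diagonal d * Uᵀ + ρ⁻¹ • S)) + S
      = U * diagonal (fun i => ρ * (x i - d i)) * Uᵀ := by
        rw [← sub_sub, smul_sub, smul_smul, mul_inv_cancel₀ hρ.ne', one_smul, sub_add_cancel,
          ← sub_mul, ← mul_sub, diagonal_sub, ← Matrix.smul_mul, ← Matrix.mul_smul,
          ← diagonal_smul]
        rfl
    _ = U * diagonal x⁻¹ * Uᵀ := by
        rw [funext fun i => mul_hglEigenvalue_sub hρ (d i)]
        rfl

end Eigenvalue

theorem hgl_theta_update_general {p : ℕ} (ρ : ℝ) (hρ : 0 < ρ)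
    (S Θt W1 : Matrix (Fin p) (Fin p) ℝ)
    (U : Matrix (Fin p) (Fin p) ℝ) (d : Fin p → ℝ)
    (hU : U * Uᵀ = 1) (hU' : Uᵀ * U = 1)
    (hdecomp : Θt - W1 - ρ⁻¹ • S = U * Matrix.diagonal d * Uᵀ)
    (Θstar : Matrix (Fin p) (Fin p) ℝ)
    (hΘstar : Θstar =
      (1 / 2 : ℝ) • (U * Matrix.diagonal (fun i => d i + Real.sqrt ((d i) ^ 2 + 4 / ρ)) * Uᵀ)) :
    Θstar.PosDef ∧
    (∀ Θ : Matrix (Fin p) (Fin p) ℝ, Θ.PosDef →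
      -Real.log Θstar.det + (S * Θstar).trace + ρ / 2 * frobSq (Θstar - Θt + W1) ≤
      -Real.log Θ.det + (S * Θ).trace + ρ / 2 * frobSq (Θ - Θt + W1)) ∧
    (∀ Θ : Matrix (Fin p) (Fin p) ℝ, Θ.PosDef → Θ ≠ Θstar →
      -Real.log Θstar.det + (S * Θstar).trace + ρ / 2 * frobSq (Θstar - Θt + W1) <
      -Real.log Θ.det + (S * Θ).trace + ρ / 2 * frobSq (Θ - Θt + W1)) := by
  set x : Fin p → ℝ := fun i => hglEigenvalue ρ (d i)
  have hx : ∀ i, 0 < x i := fun i => hglEigenvalue_pos hρ (d i)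
  have hΘx : Θstar = U * diagonal x * Uᵀ := by
    have : x = (1 / 2 : ℝ) • fun i => d i + √(d i ^ 2 + 4 / ρ) := by
      funext i
      simp only [x, hglEigenvalue, Pi.smul_apply, smul_eq_mul]
      ring
    rw [hΘstar, this, diagonal_smul, Matrix.mul_smul, Matrix.smul_mul]
  have hpd : Θstar.PosDef := hΘx ▸ posDef_mul_diagonal_mul_transpose hU hx
  have hstat : ρ • (Θstar - (Θt - W1)) + S = Θstar⁻¹ := by
    rw [hΘx]
    exact hgl_stationary hρ hU hU' hdecomp
  have hgrowth : ∀ Θ : Matrix (Fin p) (Fin p) ℝ, Θ.PosDef →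
      -Real.log Θstar.det + (S * Θstar).trace + ρ / 2 * frobSq (Θstar - Θt + W1) +
        ρ / 2 * frobSq (Θ - Θstar) ≤
      -Real.log Θ.det + (S * Θ).trace + ρ / 2 * frobSq (Θ - Θt + W1) := by
    intro Θ hΘ
    simpa only [sub_add] using objective_add_frobSq_le hpd hΘ hstat
  refine ⟨hpd, fun Θ hΘ => ?_, fun Θ hΘ hne => ?_⟩
  · linarith [hgrowth Θ hΘ, mul_nonneg hρ.le (frobSq_nonneg (Θ - Θstar))]
  · linarith [hgrowth Θ hΘ, mul_pos hρ (frobSq_pos (sub_ne_zero.mpr hne))]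

/-- The Θ-update of the ADMM algorithm for the hub graphical lasso: for `ρ > 0` and
symmetric `Θ̃`, `W₁`, `S`, the unique minimizer over symmetric positive definite `Θ` of
`−log det Θ + trace(SΘ) + (ρ/2)‖Θ − Θ̃ + W₁‖_F²` is
`Θ* = (1/2) U (D + √(D² + (4/ρ)I)) Uᵀ`, where `U D Uᵀ` is the eigendecomposition of
`Θ̃ − W₁ − (1/ρ)S`. -/
theorem hgl_theta_update {p : ℕ} (ρ : ℝ) (hρ : 0 < ρ)
    (S Θt W1 : Matrix (Fin p) (Fin p) ℝ)
    (hS : S.IsSymm) (hΘt : Θt.IsSymm) (hW1 : W1.IsSymm)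
    (U : Matrix (Fin p) (Fin p) ℝ) (d : Fin p → ℝ)
    (hU : U * Uᵀ = 1) (hU' : Uᵀ * U = 1)
    (hdecomp : Θt - W1 - ρ⁻¹ • S = U * Matrix.diagonal d * Uᵀ)
    (Θstar : Matrix (Fin p) (Fin p) ℝ)
    (hΘstar : Θstar =
      (1 / 2 : ℝ) • (U * Matrix.diagonal (fun i => d i + Real.sqrt ((d i) ^ 2 + 4 / ρ)) * Uᵀ)) :
    Θstar.PosDef ∧
    (∀ Θ : Matrix (Fin p) (Fin p) ℝ, Θ.PosDef →
      -Real.log Θstar.det + (S * Θstar).trace + ρ / 2 * frobSq (Θstar - Θt + W1) ≤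
      -Real.log Θ.det + (S * Θ).trace + ρ / 2 * frobSq (Θ - Θt + W1)) ∧
    (∀ Θ : Matrix (Fin p) (Fin p) ℝ, Θ.PosDef → Θ ≠ Θstar →
      -Real.log Θstar.det + (S * Θstar).trace + ρ / 2 * frobSq (Θstar - Θt + W1) <
      -Real.log Θ.det + (S * Θ).trace + ρ / 2 * frobSq (Θ - Θt + W1)) :=
  hgl_theta_update_general ρ hρ S Θt W1 U d hU hU' hdecomp Θstar hΘstar
end

section
/- (Sufficient condition for block-diagonal HGL solution) Let C₁,…,C_K be a partition of {1,…,p}. If min{λ₁, λ₂/2} > |S_{jj'}| for all j ∈ C_k, j' ∈ C_{k'} with k ≠ k', then the solution Θ* of the hub graphical lasso problem minimize over Θ ≻ 0 symmetric of −log det Θ + trace(SΘ) + P(Θ) is block diagonal with blocks given by C₁,…,C_K (after permutation of rows and columns). -/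
open Matrix BigOperators

def offd {p : ℕ} (A : Matrix (Fin p) (Fin p) ℝ) : Matrix (Fin p) (Fin p) ℝ :=
  A - Matrix.diagonal (fun i => A i i)

noncomputable def hubPenalty {p : ℕ} (l1 l2 l3 q : ℝ)
    (Θ : Matrix (Fin p) (Fin p) ℝ) : ℝ :=
  sInf {c : ℝ | ∃ V Z : Matrix (Fin p) (Fin p) ℝ, Z.IsSymm ∧ Θ = V + Vᵀ + Z ∧
    c = l1 * (∑ i, ∑ j, |offd Z i j|) + l2 * (∑ i, ∑ j, |offd V i j|) +
        l3 * ∑ j, (∑ i, |offd V i j| ^ q) ^ (1 / q)}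

/-!
Let `B` be the block-diagonal part of `Θ*`; it is again positive definite. Fischer's inequality
`det Θ* ≤ det B` follows from the tangent-line bound `log det Θ ≤ log det B + tr (B⁻¹ Θ) - p`
for the concave function `log det`, because `B⁻¹` is block diagonal and hence `tr (B⁻¹ Θ*) = p`.
Truncating a decomposition `Θ* = V + Vᵀ + Z` to the diagonal blocks gives a decomposition of `B`
that is cheaper by at least `λ₁ ‖Z_off‖₁ + λ₂ ‖V_off‖₁ ≥ m ‖Θ*_off‖₁`, where
`m = min λ₁ (λ₂ / 2)` and `_off` denotes the entries outside the blocks, whereas the trace term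
grows by at most `|tr (S Θ*_off)|`, which is `< m ‖Θ*_off‖₁` when `Θ*_off ≠ 0`. So `B` would beat `Θ*`.
-/

section BlockPart

variable {n κ α : Type*} [DecidableEq κ]

def blockPart [Zero α] (C : n → κ) (A : Matrix n n α) : Matrix n n α :=
  of fun i j => if C i = C j then A i j else 0

def IsBlockDiag [Zero α] (C : n → κ) (A : Matrix n n α) : Prop :=
  ∀ i j, C i ≠ C j → A i j = 0

def blockProj [Zero α] [One α] [DecidableEq n] (C : n → κ) (k : κ) : Matrix n n α :=
  diagonal fun i => if C i = k then 1 else 0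

lemma blockPart_apply [Zero α] (C : n → κ) (A : Matrix n n α) (i j : n) :
    blockPart C A i j = if C i = C j then A i j else 0 := rfl

lemma isBlockDiag_blockPart [Zero α] (C : n → κ) (A : Matrix n n α) :
    IsBlockDiag C (blockPart C A) := fun _ _ h => if_neg h

lemma sub_blockPart_apply [AddGroup α] (C : n → κ) (A : Matrix n n α) (i j : n) :
    (A - blockPart C A) i j = if C i = C j then 0 else A i j := by
  by_cases h : C i = C j <;> simp [blockPart_apply, h]

lemma blockPart_add [AddZeroClass α] (C : n → κ) (A B : Matrix n n α) :
    blockPart C (A + B) = blockPart C A + blockPart C B := by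
  ext i j; by_cases h : C i = C j <;> simp [blockPart_apply, h]

lemma blockPart_transpose [Zero α] (C : n → κ) (A : Matrix n n α) :
    blockPart C Aᵀ = (blockPart C A)ᵀ := by
  ext i j; simp [blockPart_apply, eq_comm]

lemma Matrix.IsSymm.blockPart [Zero α] {A : Matrix n n α} (hA : A.IsSymm) (C : n → κ) :
    (blockPart C A).IsSymm := by
  rw [IsSymm, ← blockPart_transpose, hA.eq]

lemma isBlockDiag_iff_forall_commute_blockProj [Semiring α] [Fintype n] [DecidableEq n]
    {C : n → κ} {A : Matrix n n α} :
    IsBlockDiag C A ↔ ∀ k, Commute (blockProj C k) A := by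
  simp only [Commute, SemiconjBy, Matrix.ext_iff.symm, blockProj, diagonal_mul, mul_diagonal]
  constructor
  · intro hA k i j
    by_cases h : C i = C j
    · simp [h]
    · simp [hA i j h]
  · intro hA i j h
    simpa [h, Ne.symm h] using hA (C i) i j

lemma IsBlockDiag.inv [CommRing α] [Fintype n] [DecidableEq n] {C : n → κ} {A : Matrix n n α}
    (hA : IsBlockDiag C A) : IsBlockDiag C A⁻¹ := by
  rw [isBlockDiag_iff_forall_commute_blockProj] at hA ⊢
  intro k
  by_cases hu : IsUnit A
  · simpa [coe_units_inv] using (hA k).units_inv_right (u := hu.unit)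
  · simp [nonsing_inv_eq_ringInverse, Ring.inverse_non_unit _ hu]

lemma IsBlockDiag.trace_mul_eq_zero [NonUnitalNonAssocSemiring α] [Fintype n] {C : n → κ}
    {A B : Matrix n n α} (hA : IsBlockDiag C A) (hB : ∀ i j, C i = C j → B i j = 0) :
    (A * B).trace = 0 := by
  refine Finset.sum_eq_zero fun i _ => Finset.sum_eq_zero fun j _ => ?_
  by_cases h : C i = C j
  · simp [hB j i h.symm]
  · simp [hA i j h]

lemma blockPart_eq_sum_blockProj [Semiring α] [Fintype n] [DecidableEq n] [Fintype κ]
    (C : n → κ) (A : Matrix n n α) :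
    blockPart C A = ∑ k, blockProj C k * A * blockProj C k := by
  ext i j
  simp only [blockPart_apply, blockProj, Matrix.sum_apply, mul_diagonal, diagonal_mul, mul_ite,
    ite_mul, mul_one, one_mul, mul_zero, zero_mul]
  simp [eq_comm]

lemma blockProj_conjTranspose [Semiring α] [StarRing α] [DecidableEq n] (C : n → κ) (k : κ) :
    (blockProj C k : Matrix n n α)ᴴ = blockProj C k := by
  simp [blockProj, diagonal_conjTranspose, apply_ite star]

lemma blockPart_conjTranspose [AddMonoid α] [StarAddMonoid α] (C : n → κ) (A : Matrix n n α) :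
    (blockPart C A)ᴴ = blockPart C Aᴴ := by
  ext i j; simp [blockPart_apply, eq_comm, apply_ite star]

lemma Matrix.PosDef.blockPart {R : Type*} [CommRing R] [PartialOrder R] [StarRing R]
    [IsOrderedCancelAddMonoid R] [Fintype n] [DecidableEq n] [Fintype κ] {A : Matrix n n R}
    (hA : A.PosDef) (C : n → κ) : (blockPart C A).PosDef := by
  refine PosDef.of_dotProduct_mulVec_pos (by rw [IsHermitian, blockPart_conjTranspose, hA.1.eq])
    fun x hx => ?_
  obtain ⟨i, hi⟩ := Function.ne_iff.mp hx
  have hquad : ∀ k, star x ⬝ᵥ (blockProj C k * A * blockProj C k) *ᵥ x =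
      star (blockProj C k *ᵥ x) ⬝ᵥ A *ᵥ (blockProj C k *ᵥ x) := fun k => by
    rw [star_mulVec, blockProj_conjTranspose, ← mulVec_mulVec, ← mulVec_mulVec, dotProduct_mulVec]
  have hi' : blockProj C (C i) *ᵥ x ≠ 0 := fun h =>
    hi (by simpa [blockProj, mulVec_diagonal] using congrFun h i)
  rw [blockPart_eq_sum_blockProj, sum_mulVec, dotProduct_sum]
  simp only [hquad]
  exact Finset.sum_pos' (fun k _ => hA.posSemidef.dotProduct_mulVec_nonneg _)
    ⟨C i, Finset.mem_univ _, hA.dotProduct_mulVec_pos hi'⟩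

end BlockPart

namespace Matrix.PosDef

variable {n : Type*} [Fintype n] [DecidableEq n]

lemma log_det_le_trace_sub_card_s7 {X : Matrix n n ℝ} (hX : X.PosDef) :
    Real.log X.det ≤ X.trace - Fintype.card n := by
  have hμ := hX.eigenvalues_pos
  rw [hX.1.det_eq_prod_eigenvalues, hX.1.trace_eq_sum_eigenvalues]
  simp only [RCLike.ofReal_real_eq_id, id]
  rw [Real.log_prod fun i _ => (hμ i).ne']
  calc ∑ i, Real.log (hX.1.eigenvalues i) ≤ ∑ i, (hX.1.eigenvalues i - 1) :=
        Finset.sum_le_sum fun i _ => Real.log_le_sub_one_of_pos (hμ i)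
    _ = _ := by simp [Finset.sum_sub_distrib]

open scoped MatrixOrder in
/-- Conjugating by `A^{-1/2}` reduces this to `A = 1`, i.e. to `log x ≤ x - 1` on eigenvalues. -/
lemma log_det_le_log_det_add_trace_inv_mul_sub_card {A B : Matrix n n ℝ} (hA : A.PosDef)
    (hB : B.PosDef) : Real.log B.det ≤ Real.log A.det + (A⁻¹ * B).trace - Fintype.card n := by
  set R := CFC.sqrt A
  have hRR : R * R = A := CFC.sqrt_mul_sqrt_self A hA.posSemidef.nonneg
  have hR : R⁻¹ = star R⁻¹ := by
    rw [star_eq_conjTranspose, conjTranspose_nonsing_inv, (CFC.sqrt_nonneg A).posSemidef.1.eq]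
  have hRdet : R.det * R.det = A.det := by rw [← det_mul, hRR]
  have hRunit : IsUnit R.det := by
    refine isUnit_iff_ne_zero.mpr fun h => hA.det_pos.ne' ?_
    rw [← hRdet, h, zero_mul]
  have hX : (R⁻¹ * B * R⁻¹).PosDef := by
    have hU : IsUnit R⁻¹ := (isUnit_iff_isUnit_det _).mpr (isUnit_nonsing_inv_det _ hRunit)
    simpa only [← hR] using (Matrix.IsUnit.posDef_star_left_conjugate_iff hU).mpr hB
  have hdet : (R⁻¹ * B * R⁻¹).det = B.det / A.det := by
    rw [det_mul, det_mul, det_nonsing_inv, ← hRdet, Ring.inverse_eq_inv']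
    field_simp [hRunit.ne_zero]
  have htr : (R⁻¹ * B * R⁻¹).trace = (A⁻¹ * B).trace := by
    rw [trace_mul_cycle, ← mul_inv_rev, hRR]
  have := hX.log_det_le_trace_sub_card_s7
  rw [hdet, htr, Real.log_div hB.det_pos.ne' hA.det_pos.ne'] at this
  linarith

end Matrix.PosDef

lemma log_det_le_log_det_blockPart {n κ : Type*} [Fintype n] [DecidableEq n]
    [Fintype κ] [DecidableEq κ] {A : Matrix n n ℝ} (hA : A.PosDef) (C : n → κ) :
    Real.log A.det ≤ Real.log (blockPart C A).det := by
  have hB := hA.blockPart C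
  have htr : ((blockPart C A)⁻¹ * A).trace = Fintype.card n := by
    have hoff : ((blockPart C A)⁻¹ * (A - blockPart C A)).trace = 0 :=
      (isBlockDiag_blockPart C A).inv.trace_mul_eq_zero fun i j h => by
        rw [sub_blockPart_apply, if_pos h]
    rw [mul_sub, trace_sub, nonsing_inv_mul _ hB.det_pos.ne'.isUnit, trace_one] at hoff
    linarith
  linarith [hB.log_det_le_log_det_add_trace_inv_mul_sub_card hA]

section AbsSum

variable {m n : Type*} [Fintype m] [Fintype n]

def absSum (A : Matrix m n ℝ) : ℝ := ∑ i, ∑ j, |A i j|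

lemma absSum_nonneg (A : Matrix m n ℝ) : 0 ≤ absSum A := by unfold absSum; positivity

lemma absSum_add_le (A B : Matrix m n ℝ) : absSum (A + B) ≤ absSum A + absSum B := by
  simp only [absSum, ← Finset.sum_add_distrib]
  exact Finset.sum_le_sum fun i _ => Finset.sum_le_sum fun j _ => abs_add_le _ _

lemma absSum_transpose (A : Matrix m n ℝ) : absSum Aᵀ = absSum A := Finset.sum_comm

lemma abs_trace_mul_lt {A : Matrix m n ℝ} {B : Matrix n m ℝ} {c : ℝ} (hB : B ≠ 0)
    (hA : ∀ i j, B i j ≠ 0 → |A j i| < c) : |(A * B).trace| < c * absSum B := by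
  obtain ⟨i₀, j₀, hB₀⟩ : ∃ i j, B i j ≠ 0 := by
    by_contra! h; exact hB (Matrix.ext h)
  have hterm : ∀ i j, |B i j * A j i| ≤ c * |B i j| := fun i j => by
    by_cases h : B i j = 0
    · simp [h]
    · rw [abs_mul, mul_comm c]; exact mul_le_mul_of_nonneg_left (hA i j h).le (abs_nonneg _)
  rw [trace_mul_comm, absSum, Finset.mul_sum]
  calc |(B * A).trace| ≤ ∑ i, ∑ j, |B i j * A j i| :=
        (Finset.abs_sum_le_sum_abs _ _).trans
          (Finset.sum_le_sum fun i _ => Finset.abs_sum_le_sum_abs _ _)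
    _ < ∑ i, c * ∑ j, |B i j| := by
        simp only [Finset.mul_sum]
        refine Finset.sum_lt_sum (fun i _ => Finset.sum_le_sum fun j _ => hterm i j)
          ⟨i₀, Finset.mem_univ _, Finset.sum_lt_sum (fun j _ => hterm i₀ j)
            ⟨j₀, Finset.mem_univ _, ?_⟩⟩
        rw [abs_mul, mul_comm c]
        exact mul_lt_mul_of_pos_left (hA i₀ j₀ hB₀) (abs_pos.mpr hB₀)

end AbsSum

lemma absSum_sub_blockPart_le {n κ : Type*} [Fintype n] [DecidableEq κ] (C : n → κ)
    (V Z : Matrix n n ℝ) :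
    absSum (V + Vᵀ + Z - blockPart C (V + Vᵀ + Z)) ≤
      2 * absSum (V - blockPart C V) + absSum (Z - blockPart C Z) := by
  have hsplit : V + Vᵀ + Z - blockPart C (V + Vᵀ + Z) =
      (V - blockPart C V) + (V - blockPart C V)ᵀ + (Z - blockPart C Z) := by
    rw [blockPart_add, blockPart_add, blockPart_transpose, transpose_sub]; abel
  rw [hsplit]
  linarith [absSum_add_le (V - blockPart C V + (V - blockPart C V)ᵀ) (Z - blockPart C Z),
    absSum_add_le (V - blockPart C V) (V - blockPart C V)ᵀ, absSum_transpose (V - blockPart C V)]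

section HubPenalty

variable {p : ℕ} {κ : Type*} [DecidableEq κ] (l1 l2 l3 q : ℝ)

lemma offd_apply (A : Matrix (Fin p) (Fin p) ℝ) (i j : Fin p) :
    offd A i j = if i = j then 0 else A i j := by
  by_cases h : i = j <;> simp [offd, h]

noncomputable def hubCost (V Z : Matrix (Fin p) (Fin p) ℝ) : ℝ :=
  l1 * absSum (offd Z) + l2 * absSum (offd V) + l3 * ∑ j, (∑ i, |offd V i j| ^ q) ^ (1 / q)

lemma hubPenalty_eq_sInf (Θ : Matrix (Fin p) (Fin p) ℝ) :
    hubPenalty l1 l2 l3 q Θ = sInf {c | ∃ V Z : Matrix (Fin p) (Fin p) ℝ, Z.IsSymm ∧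
      Θ = V + Vᵀ + Z ∧ c = hubCost l1 l2 l3 q V Z} := rfl

variable {l1 l2 l3 q}

lemma hubCost_nonneg (h1 : 0 ≤ l1) (h2 : 0 ≤ l2) (h3 : 0 ≤ l3)
    (V Z : Matrix (Fin p) (Fin p) ℝ) : 0 ≤ hubCost l1 l2 l3 q V Z := by
  unfold hubCost
  have := absSum_nonneg (offd Z)
  have := absSum_nonneg (offd V)
  positivity

lemma absSum_offd_blockPart_add (C : Fin p → κ) (A : Matrix (Fin p) (Fin p) ℝ) :
    absSum (offd (blockPart C A)) + absSum (A - blockPart C A) = absSum (offd A) := by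
  simp only [absSum, ← Finset.sum_add_distrib]
  refine Finset.sum_congr rfl fun i _ => Finset.sum_congr rfl fun j _ => ?_
  by_cases hij : i = j
  · simp [offd_apply, blockPart_apply, hij]
  · by_cases h : C i = C j <;> simp [offd_apply, blockPart_apply, hij, h]

lemma abs_offd_blockPart_le (C : Fin p → κ) (A : Matrix (Fin p) (Fin p) ℝ) (i j : Fin p) :
    |offd (blockPart C A) i j| ≤ |offd A i j| := by
  by_cases hij : i = j
  · simp [offd_apply, hij]
  · by_cases h : C i = C j <;> simp [offd_apply, blockPart_apply, hij, h]

lemma hubCost_blockPart_add_le (h3 : 0 ≤ l3) (hq : 0 ≤ q) (C : Fin p → κ)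
    (V Z : Matrix (Fin p) (Fin p) ℝ) :
    hubCost l1 l2 l3 q (blockPart C V) (blockPart C Z) + l1 * absSum (Z - blockPart C Z) +
      l2 * absSum (V - blockPart C V) ≤ hubCost l1 l2 l3 q V Z := by
  have hcol : ∑ j, (∑ i, |offd (blockPart C V) i j| ^ q) ^ (1 / q) ≤
      ∑ j, (∑ i, |offd V i j| ^ q) ^ (1 / q) :=
    Finset.sum_le_sum fun j _ => Real.rpow_le_rpow (by positivity)
      (Finset.sum_le_sum fun i _ =>
        Real.rpow_le_rpow (abs_nonneg _) (abs_offd_blockPart_le C V i j) hq)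
      (by positivity)
  unfold hubCost
  rw [← absSum_offd_blockPart_add C Z, ← absSum_offd_blockPart_add C V]
  linarith [mul_le_mul_of_nonneg_left hcol h3]

lemma hubPenalty_blockPart_add_le {m : ℝ} (hm : 0 ≤ m) (hl1 : m ≤ l1) (hl2 : 2 * m ≤ l2)
    (h3 : 0 ≤ l3) (hq : 0 ≤ q) (C : Fin p → κ) {Θ : Matrix (Fin p) (Fin p) ℝ}
    (hΘ : Θ.IsSymm) :
    hubPenalty l1 l2 l3 q (blockPart C Θ) + m * absSum (Θ - blockPart C Θ) ≤
      hubPenalty l1 l2 l3 q Θ := by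
  rw [hubPenalty_eq_sInf, hubPenalty_eq_sInf]
  refine le_csInf ⟨_, 0, Θ, hΘ, by simp, rfl⟩ ?_
  rintro _ ⟨V, Z, hZ, rfl, rfl⟩
  have hbdd : BddBelow {c | ∃ V' Z' : Matrix (Fin p) (Fin p) ℝ, Z'.IsSymm ∧
      blockPart C (V + Vᵀ + Z) = V' + V'ᵀ + Z' ∧ c = hubCost l1 l2 l3 q V' Z'} := by
    refine ⟨0, ?_⟩
    rintro _ ⟨V', Z', -, -, rfl⟩
    exact hubCost_nonneg (hm.trans hl1) (by linarith) h3 V' Z'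
  have hinf := csInf_le hbdd ⟨blockPart C V, blockPart C Z, hZ.blockPart C,
    by rw [blockPart_add, blockPart_add, blockPart_transpose], rfl⟩
  have hcost := hubCost_blockPart_add_le (l1 := l1) (l2 := l2) h3 hq C V Z
  have hoff := mul_le_mul_of_nonneg_left (absSum_sub_blockPart_le C V Z) hm
  have hl1' := mul_le_mul_of_nonneg_right hl1 (absSum_nonneg (Z - blockPart C Z))
  have hl2' := mul_le_mul_of_nonneg_right hl2 (absSum_nonneg (V - blockPart C V))
  linarith

end HubPenalty

theorem hgl_block_diagonal_sufficient_general {p K : ℕ} (l1 l2 l3 q : ℝ)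
    (h3 : 0 ≤ l3) (hq : 1 ≤ q)
    (S : Matrix (Fin p) (Fin p) ℝ)
    (C : Fin p → Fin K)
    (hcond : ∀ j j' : Fin p, C j ≠ C j' → |S j j'| < min l1 (l2 / 2))
    (Θstar : Matrix (Fin p) (Fin p) ℝ) (hpos : Θstar.PosDef)
    (hopt : ∀ Θ : Matrix (Fin p) (Fin p) ℝ, Θ.PosDef →
      -Real.log Θstar.det + (S * Θstar).trace + hubPenalty l1 l2 l3 q Θstar ≤
      -Real.log Θ.det + (S * Θ).trace + hubPenalty l1 l2 l3 q Θ) :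
    ∀ j j' : Fin p, C j ≠ C j' → Θstar j j' = 0 := by
  by_contra! ⟨a, b, hab, hΘab⟩
  set m := min l1 (l2 / 2)
  have hm : 0 < m := (abs_nonneg _).trans_lt (hcond a b hab)
  set B := blockPart C Θstar
  have hoff : Θstar - B ≠ 0 := fun h => hΘab <| by
    simpa [B, blockPart_apply, hab] using congrFun (congrFun h a) b
  have htr : |(S * (Θstar - B)).trace| < m * absSum (Θstar - B) :=
    abs_trace_mul_lt hoff fun i j h => hcond j i fun hji => h <| by
      rw [sub_blockPart_apply, if_pos hji.symm]
  have hpen : hubPenalty l1 l2 l3 q B + m * absSum (Θstar - B) ≤ hubPenalty l1 l2 l3 q Θstar :=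
    hubPenalty_blockPart_add_le hm.le (min_le_left _ _)
      (by linarith [min_le_right l1 (l2 / 2)]) h3 (by linarith) C
      (isHermitian_iff_isSymm.mp hpos.isHermitian)
  rw [mul_sub, trace_sub] at htr
  linarith [hopt B (hpos.blockPart C), log_det_le_log_det_blockPart hpos C, neg_le_abs
    ((S * Θstar).trace - (S * B).trace)]

/-- Sufficient condition for the HGL solution to be block diagonal: the partition of
`{1,…,p}` is encoded by `C : Fin p → Fin K` assigning each index to its block.  If
`min{λ₁, λ₂/2} > |S_{jj'}|` for all `j, j'` in distinct blocks, then the minimizer of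
the hub graphical lasso objective is block diagonal with these blocks. -/
theorem hgl_block_diagonal_sufficient {p K : ℕ} (l1 l2 l3 q : ℝ)
    (h1 : 0 ≤ l1) (h2 : 0 ≤ l2) (h3 : 0 ≤ l3) (hq : 1 ≤ q)
    (S : Matrix (Fin p) (Fin p) ℝ) (hS : S.IsSymm)
    (C : Fin p → Fin K)
    (hcond : ∀ j j' : Fin p, C j ≠ C j' → |S j j'| < min l1 (l2 / 2))
    (Θstar : Matrix (Fin p) (Fin p) ℝ) (hpos : Θstar.PosDef)
    (hopt : ∀ Θ : Matrix (Fin p) (Fin p) ℝ, Θ.PosDef →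
      -Real.log Θstar.det + (S * Θstar).trace + hubPenalty l1 l2 l3 q Θstar ≤
      -Real.log Θ.det + (S * Θ).trace + hubPenalty l1 l2 l3 q Θ) :
    ∀ j j' : Fin p, C j ≠ C j' → Θstar j j' = 0 :=
  hgl_block_diagonal_sufficient_general l1 l2 l3 q h3 hq S C hcond Θstar hpos hopt
end
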